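/- arXiv:1602.03257 — 5 statements merged into one kernel-verified Lean document; each statement's English description precedes it below -/
import Mathlib

section
/- For any integer N ≥ 2, the function Υ(r) = r · I_{N/2-1}(r) / I_{N/2}(r), defined for r > 0, is strictly increasing on (0,∞), and its limit as r → 0⁺ equals N. -/
/-!
Writing `I_ν(r) = (r/2)^ν f_ν(r²/4)` with the entire series `f_ν(t) = ∑ t^m / (m! Γ(m+ν+1))`,
one gets `r I_{ν-1}(r) / I_ν(r) = 2 f_{ν-1}(t) / f_ν(t)` for `t = r²/4`. The coefficients of
`f_{ν-1}` are `m + ν` times those of `f_ν`, so this ratio is twice the mean of `m + ν` under the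
weights `t^m / (m! Γ(m+ν+1))`, which is strictly increasing in `t` by Chebyshev's symmetrization
argument, and equals `ν` at `t = 0`. With `ν = N/2` the limit is `N`.
-/

open MeasureTheory Real Filter Asymptotics Set

/-- Modified Bessel function of the first kind,
`I_nu(x) = sum_m (x/2)^(2m+nu) / (m! * Gamma (m+nu+1))`. -/
noncomputable def besselI (nu x : Real) : Real :=
  tsum (fun m : Nat => (x / 2) ^ (2 * (m : Real) + nu) / ((m.factorial : Real) * Real.Gamma ((m : Real) + nu + 1)))

open scoped Topology Nat

theorem sub_mul_pow_mul_pow_sub_nonneg {w : ℕ → ℝ} (hw : Monotone w) {s t : ℝ} (hs : 0 ≤ s)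
    (hst : s ≤ t) (m n : ℕ) : 0 ≤ (w m - w n) * (t ^ m * s ^ n - s ^ m * t ^ n) := by
  wlog hnm : n ≤ m generalizing m n
  · have := this n m (le_of_not_ge hnm)
    linarith
  obtain ⟨k, rfl⟩ := Nat.exists_eq_add_of_le hnm
  have hk : t ^ (n + k) * s ^ n - s ^ (n + k) * t ^ n = s ^ n * t ^ n * (t ^ k - s ^ k) := by
    ring
  rw [hk]
  have hpow : s ^ k ≤ t ^ k := pow_le_pow_left₀ hs hst k
  have ht : 0 ≤ t := hs.trans hst
  exact mul_nonneg (sub_nonneg.2 (hw hnm)) (mul_nonneg (by positivity) (sub_nonneg.2 hpow))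

theorem tsum_pos_of_add_swap {α : Type*} {D : α × α → ℝ} (hD : Summable D)
    (h : ∀ p : α × α, 0 ≤ D p + D p.swap) {p₀ : α × α} (hp₀ : 0 < D p₀ + D p₀.swap) :
    0 < ∑' p, D p := by
  have hsum := (hD.add hD.prod_symm).tsum_pos h p₀ hp₀
  have hswap : ∑' p : α × α, D p.swap = ∑' p, D p := (Equiv.prodComm α α).tsum_eq D
  rw [hD.tsum_add hD.prod_symm, hswap] at hsum
  linarith

/-- The weighted mean of `w` with weights `b m t ^ m` is strictly increasing in `t`: symmetrizing
the double series of the difference gives `∑ b m b n (w m - w n) (t^m s^n - s^m t^n) > 0`. -/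
theorem tsum_mul_tsum_lt_of_strictMono {b w : ℕ → ℝ} (hb : ∀ m, 0 < b m) (hw : StrictMono w)
    (hw₀ : 0 ≤ w 0) {s t : ℝ} (hs : 0 ≤ s) (hst : s < t)
    (hbs : Summable fun m => b m * s ^ m) (hbt : Summable fun m => b m * t ^ m)
    (hwbs : Summable fun m => w m * b m * s ^ m) (hwbt : Summable fun m => w m * b m * t ^ m) :
    (∑' m, w m * b m * s ^ m) * (∑' m, b m * t ^ m) <
      (∑' m, w m * b m * t ^ m) * (∑' m, b m * s ^ m) := by
  have ht : 0 ≤ t := hs.trans hst.le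
  have hw_nonneg : ∀ m, 0 ≤ w m := fun m => hw₀.trans (hw.monotone m.zero_le)
  have hF : Summable fun p : ℕ × ℕ => w p.1 * b p.1 * s ^ p.1 * (b p.2 * t ^ p.2) :=
    hwbs.mul_of_nonneg hbt (fun m => by have := hb m; have := hw_nonneg m; positivity)
      (fun m => by have := hb m; positivity)
  have hG : Summable fun p : ℕ × ℕ => w p.1 * b p.1 * t ^ p.1 * (b p.2 * s ^ p.2) :=
    hwbt.mul_of_nonneg hbs (fun m => by have := hb m; have := hw_nonneg m; positivity)
      (fun m => by have := hb m; positivity)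
  have hsymm : ∀ m n : ℕ,
      (w m * b m * t ^ m * (b n * s ^ n) - w m * b m * s ^ m * (b n * t ^ n)) +
        (w n * b n * t ^ n * (b m * s ^ m) - w n * b n * s ^ n * (b m * t ^ m)) =
      b m * b n * ((w m - w n) * (t ^ m * s ^ n - s ^ m * t ^ n)) := by
    intro m n; ring
  have hpos := tsum_pos_of_add_swap (hG.sub hF) (p₀ := (1, 0)) ?_ ?_
  · rw [hG.tsum_sub hF, ← hwbs.tsum_mul_tsum hbt hF, ← hwbt.tsum_mul_tsum hbs hG] at hpos
    linarith
  · rintro ⟨m, n⟩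
    simp only [Prod.swap, hsymm]
    have := hb m; have := hb n
    exact mul_nonneg (by positivity) (sub_mul_pow_mul_pow_sub_nonneg hw.monotone hs hst.le m n)
  · simp only [Prod.swap]
    rw [hsymm]
    simp only [pow_one, pow_zero, mul_one]
    have := hb 0; have := hb 1
    have := hw Nat.zero_lt_one
    exact mul_pos (by positivity) (mul_pos (by linarith) (by linarith))

noncomputable def besselICoeff (ν : ℝ) (m : ℕ) : ℝ := ((m ! : ℝ) * Gamma (m + ν + 1))⁻¹

noncomputable def besselISeries (ν t : ℝ) : ℝ := ∑' m, besselICoeff ν m * t ^ m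

section
variable {ν : ℝ}

theorem besselICoeff_pos (hν : -1 < ν) (m : ℕ) : 0 < besselICoeff ν m := by
  have := Gamma_pos_of_pos (by linarith [m.cast_nonneg (α := ℝ)] : (0 : ℝ) < m + ν + 1)
  unfold besselICoeff; positivity

theorem besselICoeff_succ (hν : -1 < ν) (m : ℕ) :
    besselICoeff ν (m + 1) = besselICoeff ν m / ((m + 1) * (m + ν + 1)) := by
  have hpos : (0 : ℝ) < m + ν + 1 := by linarith [m.cast_nonneg (α := ℝ)]
  have hΓ : Gamma ((m + 1 : ℕ) + ν + 1) = (m + ν + 1) * Gamma (m + ν + 1) := by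
    rw [← Gamma_add_one hpos.ne']; push_cast; ring_nf
  unfold besselICoeff
  rw [hΓ, Nat.factorial_succ]
  have := Gamma_pos_of_pos hpos
  push_cast
  field_simp

theorem besselICoeff_sub_one (hν : 0 < ν) (m : ℕ) :
    besselICoeff (ν - 1) m = (m + ν) * besselICoeff ν m := by
  have hpos : (0 : ℝ) < m + ν := by positivity
  have hΓ : Gamma (m + ν + 1) = (m + ν) * Gamma (m + (ν - 1) + 1) := by
    rw [show (m : ℝ) + (ν - 1) + 1 = m + ν by ring, Gamma_add_one hpos.ne']
  unfold besselICoeff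
  rw [hΓ]
  have := Gamma_pos_of_pos (by linarith : (0 : ℝ) < m + (ν - 1) + 1)
  field_simp

theorem summable_besselICoeff_mul_pow (hν : -1 < ν) (t : ℝ) :
    Summable fun m => besselICoeff ν m * t ^ m := by
  have hden : Tendsto (fun m : ℕ => ((m : ℝ) + 1) * (m + ν + 1)) atTop atTop :=
    (tendsto_atTop_add_const_right _ 1 tendsto_natCast_atTop_atTop).atTop_mul_atTop₀
      (tendsto_atTop_add_const_right _ 1
        (tendsto_atTop_add_const_right _ ν tendsto_natCast_atTop_atTop))
  have hratio : ∀ᶠ m : ℕ in atTop, ‖t‖ / ((m + 1) * (m + ν + 1)) ≤ 1 / 2 :=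
    (tendsto_const_nhds.div_atTop hden).eventually (ge_mem_nhds one_half_pos)
  refine summable_of_ratio_norm_eventually_le one_half_lt_one ?_
  filter_upwards [hratio] with m hm
  have hstep : ‖besselICoeff ν (m + 1) * t ^ (m + 1)‖ =
      ‖t‖ / ((m + 1) * (m + ν + 1)) * ‖besselICoeff ν m * t ^ m‖ := by
    have : (0 : ℝ) < m + ν + 1 := by linarith [m.cast_nonneg (α := ℝ)]
    rw [besselICoeff_succ hν, norm_mul, norm_mul, norm_div,
      norm_of_nonneg (by positivity : (0 : ℝ) ≤ (m + 1) * (m + ν + 1)), norm_pow, norm_pow,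
      pow_succ]
    ring
  rw [hstep]
  exact mul_le_mul_of_nonneg_right hm (norm_nonneg _)

theorem continuous_besselISeries (hν : -1 < ν) : Continuous (besselISeries ν) := by
  refine continuous_iff_continuousAt.2 fun x => ?_
  set R := |x| + 1
  have hx : x ∈ Ioo (-R) R := abs_lt.1 (lt_add_one |x|)
  refine (continuousOn_tsum (f := fun m y => besselICoeff ν m * y ^ m)
    (fun m => (continuous_const.mul (continuous_pow m)).continuousOn)
    (summable_besselICoeff_mul_pow hν R) fun m y hy => ?_).continuousAt
    (Ioo_mem_nhds hx.1 hx.2)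
  have := besselICoeff_pos hν m
  rw [norm_mul, norm_pow, Real.norm_eq_abs, Real.norm_eq_abs, abs_of_pos this]
  exact mul_le_mul_of_nonneg_left (pow_le_pow_left₀ (abs_nonneg y) (abs_lt.2 hy).le m) this.le

theorem besselISeries_zero : besselISeries ν 0 = besselICoeff ν 0 := by
  rw [besselISeries, tsum_eq_single 0 fun m hm => by simp [hm]]
  simp

theorem besselISeries_pos (hν : -1 < ν) {t : ℝ} (ht : 0 ≤ t) : 0 < besselISeries ν t :=
  (summable_besselICoeff_mul_pow hν t).tsum_pos
    (fun m => by have := besselICoeff_pos hν m; positivity) 0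
    (by simpa using besselICoeff_pos hν 0)

theorem besselI_eq_rpow_mul_besselISeries {r : ℝ} (hr : 0 < r) :
    besselI ν r = (r / 2) ^ ν * besselISeries ν (r ^ 2 / 4) := by
  rw [besselI, besselISeries, ← tsum_mul_left]
  congr 1 with m
  have hpow : (r / 2) ^ (2 * (m : ℝ) + ν) = (r / 2) ^ ν * (r ^ 2 / 4) ^ m := by
    rw [rpow_add (by positivity), mul_comm,
      show (2 : ℝ) * m = ((2 * m : ℕ) : ℝ) by push_cast; ring, rpow_natCast, pow_mul]
    ring
  rw [hpow, besselICoeff]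
  ring

theorem mul_besselI_sub_one_div_besselI {r : ℝ} (hr : 0 < r) :
    r * besselI (ν - 1) r / besselI ν r =
      2 * (besselISeries (ν - 1) (r ^ 2 / 4) / besselISeries ν (r ^ 2 / 4)) := by
  have hsplit : (r / 2) ^ ν = r / 2 * (r / 2) ^ (ν - 1) := by
    conv_lhs => rw [← add_sub_cancel 1 ν, rpow_add (by positivity), rpow_one]
  rw [besselI_eq_rpow_mul_besselISeries hr, besselI_eq_rpow_mul_besselISeries hr, hsplit]
  have : 0 < (r / 2) ^ (ν - 1) := by positivity
  field_simp

theorem strictMonoOn_besselISeries_sub_one_div (hν : 0 < ν) :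
    StrictMonoOn (fun t => besselISeries (ν - 1) t / besselISeries ν t) (Ici 0) := by
  intro s hs t ht hst
  have hν₁ : -1 < ν - 1 := by linarith
  have hν₀ : -1 < ν := by linarith
  have hshift : ∀ x : ℝ, (fun m : ℕ => ((m : ℝ) + ν) * besselICoeff ν m * x ^ m) =
      fun m => besselICoeff (ν - 1) m * x ^ m := fun x => by
    ext m; rw [besselICoeff_sub_one hν]
  have key := tsum_mul_tsum_lt_of_strictMono (besselICoeff_pos hν₀)
    (w := fun m : ℕ => (m : ℝ) + ν) (fun m n h => by simpa using h) (by simpa using hν.le)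
    (mem_Ici.1 hs) hst (summable_besselICoeff_mul_pow hν₀ s)
    (summable_besselICoeff_mul_pow hν₀ t)
    (by rw [hshift]; exact summable_besselICoeff_mul_pow hν₁ s)
    (by rw [hshift]; exact summable_besselICoeff_mul_pow hν₁ t)
  simp only [hshift] at key
  rwa [div_lt_div_iff₀ (besselISeries_pos hν₀ (mem_Ici.1 hs))
    (besselISeries_pos hν₀ (mem_Ici.1 ht))]

theorem strictMonoOn_mul_besselI_sub_one_div_besselI (hν : 0 < ν) :
    StrictMonoOn (fun r => r * besselI (ν - 1) r / besselI ν r) (Ioi 0) := by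
  intro r hr r' hr' hrr'
  simp only [mul_besselI_sub_one_div_besselI (mem_Ioi.1 hr),
    mul_besselI_sub_one_div_besselI (mem_Ioi.1 hr')]
  have := strictMonoOn_besselISeries_sub_one_div hν (by positivity : (0 : ℝ) ≤ r ^ 2 / 4)
    (by positivity : (0 : ℝ) ≤ r' ^ 2 / 4) (by gcongr; exact (mem_Ioi.1 hr).le)
  linarith

theorem tendsto_mul_besselI_sub_one_div_besselI (hν : 0 < ν) :
    Tendsto (fun r => r * besselI (ν - 1) r / besselI ν r) (𝓝[>] 0) (𝓝 (2 * ν)) := by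
  have hν₁ : -1 < ν - 1 := by linarith
  have hν₀ : -1 < ν := by linarith
  have hsq : Continuous fun r : ℝ => r ^ 2 / 4 := by fun_prop
  have hcont : Continuous
      fun r : ℝ => 2 * (besselISeries (ν - 1) (r ^ 2 / 4) / besselISeries ν (r ^ 2 / 4)) :=
    continuous_const.mul <| ((continuous_besselISeries hν₁).comp hsq).div
      ((continuous_besselISeries hν₀).comp hsq) fun r => (besselISeries_pos hν₀ (by positivity)).ne'
  have hval : 2 * (besselISeries (ν - 1) (0 ^ 2 / 4) / besselISeries ν (0 ^ 2 / 4)) = 2 * ν := by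
    have := besselICoeff_pos hν₀ 0
    rw [zero_pow two_ne_zero, zero_div, besselISeries_zero, besselISeries_zero,
      besselICoeff_sub_one hν, Nat.cast_zero, zero_add]
    field_simp
  rw [← hval]
  refine ((hcont.tendsto 0).mono_left nhdsWithin_le_nhds).congr' ?_
  filter_upwards [self_mem_nhdsWithin] with r hr
  exact (mul_besselI_sub_one_div_besselI hr).symm

end

theorem stmt_3 (N : ℕ) (hN : 2 ≤ N) :
    StrictMonoOn (fun r : ℝ => r * besselI ((N : ℝ) / 2 - 1) r / besselI ((N : ℝ) / 2) r)
        (Set.Ioi 0) ∧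
      Filter.Tendsto (fun r : ℝ => r * besselI ((N : ℝ) / 2 - 1) r / besselI ((N : ℝ) / 2) r)
        (nhdsWithin 0 (Set.Ioi 0)) (nhds (N : ℝ)) := by
  have hν : (0 : ℝ) < N / 2 := by
    have : (2 : ℝ) ≤ N := by exact_mod_cast hN
    linarith
  refine ⟨strictMonoOn_mul_besselI_sub_one_div_besselI hν, ?_⟩
  simpa [mul_div_cancel₀] using tendsto_mul_besselI_sub_one_div_besselI hν
end

section
/- For any integer N ≥ 2 and any β > N, the equation b = β · I_{N/2}(b)/I_{N/2-1}(b) has a unique strictly positive solution b, and this solution tends to 0 as β ↓ N. -/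
open MeasureTheory Real Filter Asymptotics Set

/-!
With `t = (x/2)^2` one has `I_ν(x) = (x/2)^ν S_ν(t)` for the entire series
`S_ν(t) = ∑ t^m / (m! Γ(m+ν+1))`, so for `ν = N/2` the equation `x = β I_ν(x) / I_{ν-1}(x)`
becomes `2 S_{ν-1}(t) = β S_ν(t)`, that is `∑ a_m (2(m+ν) - β) t^m = 0` with all `a_m > 0`.
For `β > 2ν` the coefficients change sign exactly once, from negative to positive, so by
Descartes' rule of signs the series has exactly one positive zero: it is negative at `0`,
positive for large `t`, and positive beyond any point where it is nonnegative.
At a fixed `δ > 0` the series depends continuously on `β` and at `β = 2ν` equals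
`∑ 2m a_m δ^m > 0`; so for `β` close to `2ν` it is positive at `δ`, and the zero lies below `δ`.
-/

open Topology

structure HasOneSignChange (c : ℕ → ℝ) (K : ℕ) : Prop where
  nonpos : ∀ m ≤ K, c m ≤ 0
  pos : ∀ m, K < m → 0 < c m

namespace HasOneSignChange

variable {c : ℕ → ℝ} {K : ℕ}

theorem pow_mul_le (h : HasOneSignChange c K) {r t : ℝ} (hr : 1 ≤ r) (ht : 0 ≤ t) (m : ℕ) :
    r ^ K * (c m * t ^ m) ≤ c m * (r * t) ^ m := by
  rw [mul_pow, show c m * (r ^ m * t ^ m) = r ^ m * (c m * t ^ m) by ring]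
  rcases le_or_gt m K with hm | hm
  · exact mul_le_mul_of_nonpos_right (pow_le_pow_right₀ hr hm)
      (mul_nonpos_of_nonpos_of_nonneg (h.nonpos m hm) (pow_nonneg ht m))
  · exact mul_le_mul_of_nonneg_right (pow_le_pow_right₀ hr hm.le)
      (mul_nonneg (h.pos m hm).le (pow_nonneg ht m))

theorem pow_mul_lt (h : HasOneSignChange c K) {r t : ℝ} (hr : 1 < r) (ht : 0 < t) :
    r ^ K * (c (K + 1) * t ^ (K + 1)) < c (K + 1) * (r * t) ^ (K + 1) := by
  rw [mul_pow, show c (K + 1) * (r ^ (K + 1) * t ^ (K + 1)) = r ^ (K + 1) * (c (K + 1) * t ^ (K + 1))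
    by ring]
  exact mul_lt_mul_of_pos_right (pow_lt_pow_right₀ hr K.lt_succ_self)
    (mul_pos (h.pos _ K.lt_succ_self) (pow_pos ht _))

/-- Descartes' rule of signs for a single sign change. -/
theorem tsum_mul_pow_pos (h : HasOneSignChange c K) {t s : ℝ} (ht : 0 < t) (hts : t < s)
    (hct : Summable fun m => c m * t ^ m) (hcs : Summable fun m => c m * s ^ m)
    (hF : 0 ≤ ∑' m, c m * t ^ m) : 0 < ∑' m, c m * s ^ m := by
  set r := s / t
  have hr : 1 < r := (one_lt_div ht).2 hts
  have hs : s = r * t := (div_mul_cancel₀ s ht.ne').symm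
  calc 0 ≤ r ^ K * ∑' m, c m * t ^ m := mul_nonneg (by positivity) hF
    _ = ∑' m, r ^ K * (c m * t ^ m) := tsum_mul_left.symm
    _ < ∑' m, c m * s ^ m := by
      rw [hs]
      exact Summable.tsum_lt_tsum (h.pow_mul_le hr.le ht.le) (h.pow_mul_lt hr ht)
        (hct.mul_left _) (hs ▸ hcs)

theorem le_of_tsum_mul_pow_eq_zero (h : HasOneSignChange c K)
    (hc : ∀ t, Summable fun m => c m * t ^ m) {u δ : ℝ}
    (hFu : ∑' m, c m * u ^ m = 0) (hδ : 0 < δ) (hFδ : 0 ≤ ∑' m, c m * δ ^ m) : u ≤ δ := by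
  by_contra! hδu
  exact (h.tsum_mul_pow_pos hδ hδu (hc δ) (hc u) hFδ).ne' hFu

theorem exists_tsum_mul_pow_pos (h : HasOneSignChange c K)
    (hc : ∀ t, Summable fun m => c m * t ^ m) : ∃ T, 0 < T ∧ 0 < ∑' m, c m * T ^ m := by
  set A := ∑ m ∈ Finset.range (K + 1), c m
  have hK := h.pos (K + 1) K.lt_succ_self
  set T := max 1 (1 - A / c (K + 1))
  have hT : 1 ≤ T := le_max_left _ _
  have hAT : c (K + 1) ≤ A + c (K + 1) * T := by
    have := mul_le_mul_of_nonneg_left (le_max_right 1 (1 - A / c (K + 1))) hK.le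
    rw [mul_sub, mul_div_cancel₀ _ hK.ne'] at this
    linarith
  refine ⟨T, by positivity, ?_⟩
  have hlow : A * T ^ K ≤ ∑ m ∈ Finset.range (K + 1), c m * T ^ m := by
    rw [Finset.sum_mul]
    refine Finset.sum_le_sum fun m hm => mul_le_mul_of_nonpos_left ?_ ?_
    · exact pow_le_pow_right₀ hT (Nat.lt_succ_iff.1 (Finset.mem_range.1 hm))
    · exact h.nonpos m (Nat.lt_succ_iff.1 (Finset.mem_range.1 hm))
  calc 0 < T ^ K * c (K + 1) := by positivity
    _ ≤ T ^ K * (A + c (K + 1) * T) := by gcongr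
    _ = A * T ^ K + c (K + 1) * T ^ (K + 1) := by ring
    _ ≤ ∑ m ∈ Finset.range (K + 2), c m * T ^ m := by
      rw [Finset.sum_range_succ]; gcongr
    _ ≤ ∑' m, c m * T ^ m := by
      refine (hc T).sum_le_tsum _ fun m hm => mul_nonneg (h.pos m ?_).le (by positivity)
      simp only [Finset.mem_range, not_lt] at hm
      omega

theorem exists_pos_tsum_mul_pow_eq_zero (h : HasOneSignChange c K)
    (hc : ∀ t, Summable fun m => c m * t ^ m) (h0 : c 0 < 0) :
    ∃ t, 0 < t ∧ ∑' m, c m * t ^ m = 0 := by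
  have hF0 : ∑' m, c m * (0 : ℝ) ^ m = c 0 := by
    rw [tsum_eq_single 0 fun m hm => by simp [zero_pow hm]]
    simp
  obtain ⟨T, hT, hFT⟩ := h.exists_tsum_mul_pow_pos hc
  have hcont : ContinuousOn (fun t => ∑' m, c m * t ^ m) (Icc 0 T) := by
    refine continuousOn_tsum (fun m => (continuous_const.mul (continuous_pow m)).continuousOn)
      (hc T).abs fun m t ht => ?_
    rw [norm_mul, norm_pow, Real.norm_eq_abs, Real.norm_eq_abs, abs_mul, abs_pow,
      abs_of_nonneg ht.1, abs_of_pos hT]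
    exact mul_le_mul_of_nonneg_left (pow_le_pow_left₀ ht.1 ht.2 m) (abs_nonneg _)
  obtain ⟨t, ht, hFt⟩ := intermediate_value_Icc hT.le hcont ⟨hF0.le.trans h0.le, hFT.le⟩
  refine ⟨t, ht.1.lt_of_ne ?_, hFt⟩
  rintro rfl
  exact h0.ne (hF0 ▸ hFt)

theorem existsUnique_pos_tsum_mul_pow_eq_zero (h : HasOneSignChange c K)
    (hc : ∀ t, Summable fun m => c m * t ^ m) (h0 : c 0 < 0) :
    ∃! t, 0 < t ∧ ∑' m, c m * t ^ m = 0 := by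
  obtain ⟨t, ht, hFt⟩ := h.exists_pos_tsum_mul_pow_eq_zero hc h0
  exact ⟨t, ⟨ht, hFt⟩, fun u ⟨hu, hFu⟩ => le_antisymm
    (h.le_of_tsum_mul_pow_eq_zero hc hFu ht hFt.ge)
    (h.le_of_tsum_mul_pow_eq_zero hc hFt hu hFu.ge)⟩

end HasOneSignChange

noncomputable def besselCoeff (ν : ℝ) (m : ℕ) : ℝ := ((m.factorial : ℝ) * Gamma (m + ν + 1))⁻¹

noncomputable def besselSeries (ν t : ℝ) : ℝ := ∑' m, besselCoeff ν m * t ^ m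

theorem besselCoeff_pos {ν : ℝ} (hν : -1 < ν) (m : ℕ) : 0 < besselCoeff ν m := by
  have : 0 < Gamma (m + ν + 1) := Gamma_pos_of_pos (by linarith [(m.cast_nonneg : (0 : ℝ) ≤ m)])
  unfold besselCoeff
  positivity

theorem besselCoeff_sub_one {ν : ℝ} (hν : 0 < ν) (m : ℕ) :
    besselCoeff (ν - 1) m = (m + ν) * besselCoeff ν m := by
  have hmν : (m : ℝ) + ν ≠ 0 := by positivity
  unfold besselCoeff
  rw [show (m : ℝ) + (ν - 1) + 1 = m + ν by ring, Gamma_add_one hmν]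
  field_simp

theorem Gamma_add_one_le_Gamma_nat_add_add_one {ν : ℝ} (hν : 0 ≤ ν) (m : ℕ) :
    Gamma (ν + 1) ≤ Gamma (m + ν + 1) := by
  induction m with
  | zero => simp
  | succ m ih =>
    have hpos : 0 < Gamma (m + ν + 1) := Gamma_pos_of_pos (by positivity)
    rw [Nat.cast_succ, show (m : ℝ) + 1 + ν + 1 = (m + ν + 1) + 1 by ring,
      Gamma_add_one (s := m + ν + 1) (by positivity)]
    nlinarith

theorem besselCoeff_le {ν : ℝ} (hν : 0 ≤ ν) (m : ℕ) :
    besselCoeff ν m ≤ (Gamma (ν + 1))⁻¹ * (m.factorial : ℝ)⁻¹ := by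
  have hΓ : 0 < Gamma (ν + 1) := Gamma_pos_of_pos (by positivity)
  unfold besselCoeff
  rw [mul_inv, mul_comm]
  gcongr
  exact Gamma_add_one_le_Gamma_nat_add_add_one hν m

theorem summable_besselCoeff_mul_pow {ν : ℝ} (hν : 0 ≤ ν) (t : ℝ) :
    Summable fun m => besselCoeff ν m * t ^ m := by
  refine ((summable_pow_div_factorial |t|).mul_left (Gamma (ν + 1))⁻¹).of_norm_bounded fun m => ?_
  calc ‖besselCoeff ν m * t ^ m‖ = besselCoeff ν m * |t| ^ m := by
        rw [norm_mul, norm_pow, Real.norm_eq_abs, Real.norm_eq_abs,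
          abs_of_pos (besselCoeff_pos (by linarith) m)]
    _ ≤ (Gamma (ν + 1))⁻¹ * (m.factorial : ℝ)⁻¹ * |t| ^ m := by
        gcongr
        exact besselCoeff_le hν m
    _ = (Gamma (ν + 1))⁻¹ * (|t| ^ m / m.factorial) := by ring

theorem besselSeries_pos {ν t : ℝ} (hν : 0 ≤ ν) (ht : 0 ≤ t) : 0 < besselSeries ν t :=
  (summable_besselCoeff_mul_pow hν t).tsum_pos
    (fun m => mul_nonneg (besselCoeff_pos (by linarith) m).le (pow_nonneg ht m)) 0
    (by simpa using besselCoeff_pos (by linarith) 0)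

theorem besselI_eq_rpow_mul_besselSeries (ν : ℝ) {x : ℝ} (hx : 0 < x) :
    besselI ν x = (x / 2) ^ ν * besselSeries ν ((x / 2) ^ 2) := by
  unfold besselI besselSeries besselCoeff
  rw [← tsum_mul_left]
  congr 1 with m
  rw [rpow_add (by positivity), show 2 * (m : ℝ) = ((2 * m : ℕ) : ℝ) by push_cast; ring,
    rpow_natCast, pow_mul]
  ring

noncomputable def besselDefect (ν β t : ℝ) : ℝ := 2 * besselSeries (ν - 1) t - β * besselSeries ν t

noncomputable def besselDefectCoeff (ν β : ℝ) (m : ℕ) : ℝ := besselCoeff ν m * (2 * (m + ν) - β)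

theorem eq_mul_besselI_div_iff {ν β x : ℝ} (hν : 1 ≤ ν) (hx : 0 < x) :
    x = β * (besselI ν x / besselI (ν - 1) x) ↔ besselDefect ν β ((x / 2) ^ 2) = 0 := by
  set t := (x / 2) ^ 2
  have hS : 0 < besselSeries (ν - 1) t := besselSeries_pos (by linarith) (by positivity)
  have hratio : besselI ν x / besselI (ν - 1) x = x / 2 * besselSeries ν t / besselSeries (ν - 1) t := by
    have hx2 : 0 < x / 2 := by positivity
    rw [besselI_eq_rpow_mul_besselSeries ν hx, besselI_eq_rpow_mul_besselSeries (ν - 1) hx,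
      show (x / 2) ^ ν = (x / 2) ^ (ν - 1) * (x / 2) by
        rw [← rpow_add_one hx2.ne', sub_add_cancel],
      mul_assoc, mul_div_mul_left _ _ (rpow_pos_of_pos hx2 _).ne']
  rw [hratio, besselDefect, eq_comm, ← sub_eq_zero]
  rw [show β * (x / 2 * besselSeries ν t / besselSeries (ν - 1) t) - x
    = -(x / 2) / besselSeries (ν - 1) t * (2 * besselSeries (ν - 1) t - β * besselSeries ν t) by
      field_simp; ring]
  simp [hx.ne', hS.ne']

theorem hasSum_besselDefect {ν : ℝ} (hν : 1 ≤ ν) (β t : ℝ) :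
    HasSum (fun m => besselDefectCoeff ν β m * t ^ m) (besselDefect ν β t) := by
  have h := (((summable_besselCoeff_mul_pow (ν := ν - 1) (by linarith) t).hasSum.mul_left 2).sub
    ((summable_besselCoeff_mul_pow (ν := ν) (by linarith) t).hasSum.mul_left β))
  refine h.congr_fun fun m => ?_
  rw [besselDefectCoeff, besselCoeff_sub_one (by linarith)]
  ring

theorem hasOneSignChange_besselDefectCoeff {ν β : ℝ} (hν : -1 < ν) (hβ : 2 * ν ≤ β) :
    HasOneSignChange (besselDefectCoeff ν β) ⌊(β - 2 * ν) / 2⌋₊ where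
  nonpos m hm := by
    have : (m : ℝ) ≤ (β - 2 * ν) / 2 :=
      (Nat.cast_le.2 hm).trans (Nat.floor_le (by linarith))
    exact mul_nonpos_of_nonneg_of_nonpos (besselCoeff_pos hν m).le (by linarith)
  pos m hm := by
    have : (β - 2 * ν) / 2 < m :=
      (Nat.lt_floor_add_one _).trans_le (by exact_mod_cast hm)
    exact mul_pos (besselCoeff_pos hν m) (by linarith)

theorem existsUnique_pos_eq_mul_besselI_div {ν β : ℝ} (hν : 1 ≤ ν) (hβ : 2 * ν < β) :
    ∃! x, 0 < x ∧ x = β * (besselI ν x / besselI (ν - 1) x) := by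
  have hsum t := (hasSum_besselDefect hν β t).summable
  have h0 : besselDefectCoeff ν β 0 < 0 :=
    mul_neg_of_pos_of_neg (besselCoeff_pos (by linarith) 0) (by simpa using hβ)
  obtain ⟨t, ⟨ht, hroot⟩, huniq⟩ :=
    (hasOneSignChange_besselDefectCoeff (by linarith) hβ.le).existsUnique_pos_tsum_mul_pow_eq_zero
      hsum h0
  simp only [(hasSum_besselDefect hν β _).tsum_eq] at hroot huniq
  refine ⟨2 * √t, ⟨by positivity, (eq_mul_besselI_div_iff hν (by positivity)).2 ?_⟩, ?_⟩
  · rwa [mul_div_cancel_left₀ _ two_ne_zero, sq_sqrt ht.le]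
  · rintro x ⟨hx, hxeq⟩
    rw [← huniq _ ⟨by positivity, (eq_mul_besselI_div_iff hν hx).1 hxeq⟩, sqrt_sq (by positivity)]
    ring

theorem sq_half_le_of_eq_mul_besselI_div {ν β x δ : ℝ} (hν : 1 ≤ ν) (hβ : 2 * ν ≤ β) (hx : 0 < x)
    (hxeq : x = β * (besselI ν x / besselI (ν - 1) x)) (hδ : 0 < δ)
    (hFδ : 0 ≤ besselDefect ν β δ) : (x / 2) ^ 2 ≤ δ := by
  have hsum t := (hasSum_besselDefect hν β t).summable
  simp only [← (hasSum_besselDefect hν β _).tsum_eq] at hFδ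
  refine (hasOneSignChange_besselDefectCoeff (by linarith) hβ).le_of_tsum_mul_pow_eq_zero hsum
    ?_ hδ hFδ
  rw [(hasSum_besselDefect hν β _).tsum_eq]
  exact (eq_mul_besselI_div_iff hν hx).1 hxeq

theorem besselDefect_two_mul_pos {ν δ : ℝ} (hν : 1 ≤ ν) (hδ : 0 < δ) :
    0 < besselDefect ν (2 * ν) δ := by
  refine hasSum_lt (f := 0) (fun m => ?_) ?_ hasSum_zero (hasSum_besselDefect hν (2 * ν) δ) (i := 1)
  · exact mul_nonneg (mul_nonneg (besselCoeff_pos (by linarith) m).le (by simp)) (by positivity)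
  · exact mul_pos (mul_pos (besselCoeff_pos (by linarith) 1) (by simp)) (by positivity)

theorem tendsto_of_eq_mul_besselI_div {ν : ℝ} (hν : 1 ≤ ν) (sol : ℝ → ℝ)
    (hsol : ∀ β, 2 * ν < β → 0 < sol β ∧ sol β = β * (besselI ν (sol β) / besselI (ν - 1) (sol β))) :
    Tendsto sol (𝓝[>] (2 * ν)) (𝓝 0) := by
  rw [Metric.tendsto_nhds]
  intro ε hε
  have hδ : 0 < (ε / 4) ^ 2 := by positivity
  have hcont : Continuous fun β => besselDefect ν β ((ε / 4) ^ 2) := by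
    unfold besselDefect
    fun_prop
  have hnear : ∀ᶠ β in 𝓝[>] (2 * ν), 0 < besselDefect ν β ((ε / 4) ^ 2) :=
    nhdsWithin_le_nhds ((hcont.tendsto _).eventually (lt_mem_nhds (besselDefect_two_mul_pos hν hδ)))
  filter_upwards [hnear, self_mem_nhdsWithin] with β hβδ hβ
  obtain ⟨hpos, heq⟩ := hsol β hβ
  have hle := sq_half_le_of_eq_mul_besselI_div hν hβ.le hpos heq hδ hβδ.le
  have := (pow_le_pow_iff_left₀ (by positivity) (by positivity) two_ne_zero).1 hle
  rw [Real.dist_eq, sub_zero, abs_of_pos hpos]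
  linarith

theorem stmt_4 (N : ℕ) (hN : 2 ≤ N) :
    (∀ β : ℝ, (N : ℝ) < β →
      ∃! b : ℝ, 0 < b ∧ b = β * (besselI ((N : ℝ) / 2) b / besselI ((N : ℝ) / 2 - 1) b)) ∧
    ∀ sol : ℝ → ℝ,
      (∀ β : ℝ, (N : ℝ) < β → 0 < sol β ∧
        sol β = β * (besselI ((N : ℝ) / 2) (sol β) / besselI ((N : ℝ) / 2 - 1) (sol β))) →
      Filter.Tendsto sol (nhdsWithin (N : ℝ) (Set.Ioi (N : ℝ))) (nhds 0) := by
  have hν : 1 ≤ (N : ℝ) / 2 := by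
    rw [le_div_iff₀ two_pos, one_mul]
    exact_mod_cast hN
  have hN2 : 2 * ((N : ℝ) / 2) = N := by ring
  refine ⟨fun β hβ => existsUnique_pos_eq_mul_besselI_div hν (by rwa [hN2]), fun sol hsol => ?_⟩
  have h := tendsto_of_eq_mul_besselI_div hν sol fun β hβ => hsol β (by rwa [hN2] at hβ)
  rwa [hN2] at h
end

section
/- For an integer N ≥ 2 and c ∈ ℝ, ∫_{-1}^1 u·e^{cu}(1-u²)^{(N-3)/2} du / ∫_{-1}^1 e^{cu}(1-u²)^{(N-3)/2} du = I_{N/2}(c)/I_{N/2-1}(c) for c > 0. -/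
open MeasureTheory Real Filter Asymptotics Set

/-!
Expand `e^{cu}` in its Taylor series and integrate termwise against the weight `(1 - u²)^α`.
The odd moments of the weight vanish and the even ones are Beta integrals `B(j + 1/2, α + 1)`;
Legendre's duplication formula turns the resulting series into Poisson's integral
`∫_{-1}^1 u^k e^{cu} (1 - u²)^α du = √π Γ(α + 1) (c/2)^{-(α + 1/2)} I_{α + 1/2 + k}(c)`
for `k = 0, 1`. With `α = (N - 3)/2` the quotient of the cases `k = 1` and `k = 0` is the claim.
-/

open scoped Nat

lemma integral_rpow_mul_one_sub_rpow {a b : ℝ} (ha : 0 < a) (hb : 0 < b) :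
    ∫ x in (0 : ℝ)..1, x ^ (a - 1) * (1 - x) ^ (b - 1) = Gamma a * Gamma b / Gamma (a + b) := by
  have hbeta : Complex.betaIntegral a b
      = ((∫ x in (0 : ℝ)..1, x ^ (a - 1) * (1 - x) ^ (b - 1) : ℝ) : ℂ) := by
    rw [Complex.betaIntegral, ← intervalIntegral.integral_ofReal]
    refine intervalIntegral.integral_congr fun x hx => ?_
    rw [uIcc_of_le zero_le_one] at hx
    rw [Complex.ofReal_mul, Complex.ofReal_cpow hx.1, Complex.ofReal_cpow (sub_nonneg.2 hx.2)]
    push_cast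
    rfl
  have key := Complex.Gamma_mul_Gamma_eq_betaIntegral (s := a) (t := b) (by simpa) (by simpa)
  rw [hbeta, ← Complex.ofReal_add, Complex.Gamma_ofReal, Complex.Gamma_ofReal,
    Complex.Gamma_ofReal, ← Complex.ofReal_mul, ← Complex.ofReal_mul] at key
  rw [eq_div_iff (Gamma_pos_of_pos (add_pos ha hb)).ne', mul_comm]
  exact_mod_cast key.symm

lemma Gamma_nat_add_half_mul_factorial {m k : ℕ} (hk : k ≤ 1) :
    Gamma (m + k + 1 / 2) * m ! * 2 ^ (2 * m + k) = (2 * m + k)! * √π := by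
  set s : ℝ := (2 * m + k + 1) / 2
  have hprod : Gamma s * Gamma (s + 1 / 2) = Gamma (m + k + 1 / 2) * m ! := by
    obtain rfl | rfl : k = 0 ∨ k = 1 := by omega
    all_goals rw [← Gamma_nat_eq_factorial]; push_cast [s]; ring_nf
  have hfac : Gamma (2 * s) = (2 * m + k)! := by
    rw [← Gamma_nat_eq_factorial]; push_cast [s]; ring_nf
  have hpow : (2 : ℝ) ^ (1 - 2 * s) * 2 ^ (2 * m + k) = 1 := by
    rw [← rpow_natCast, ← rpow_add two_pos]; push_cast [s]; ring_nf; exact rpow_zero 2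
  rw [← hprod, Gamma_mul_Gamma_add_half, hfac]
  linear_combination ((2 * m + k)! * √π) * hpow

lemma image_sq_Ioo_zero_one : (fun t : ℝ => t ^ 2) '' Ioo 0 1 = Ioo 0 1 := by
  ext x
  constructor
  · rintro ⟨t, ⟨ht0, ht1⟩, rfl⟩
    exact ⟨by positivity, by nlinarith⟩
  · rintro ⟨hx0, hx1⟩
    exact ⟨√x, ⟨sqrt_pos.2 hx0, (sqrt_lt' one_pos).2 (by simpa using hx1)⟩,
      sq_sqrt hx0.le⟩

section Moments

variable {α : ℝ}

lemma intervalIntegrable_one_sub_sq_rpow_zero_one (hα : -1 < α) :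
    IntervalIntegrable (fun u : ℝ => (1 - u ^ 2) ^ α) volume 0 1 := by
  have h : IntervalIntegrable (fun u : ℝ => (1 - u) ^ α * (1 + u) ^ α) volume 0 1 := by
    refine IntervalIntegrable.mul_continuousOn ?_ ?_
    · simpa using (intervalIntegral.intervalIntegrable_rpow' hα (a := 1) (b := 0)).comp_sub_left 1
    · refine ContinuousOn.rpow_const (by fun_prop) fun u hu => Or.inl ?_
      rw [uIcc_of_le zero_le_one] at hu
      linarith [hu.1]
  refine h.congr fun u hu => ?_
  rw [uIoc_of_le zero_le_one] at hu
  rw [← Real.mul_rpow (by linarith [hu.2]) (by linarith [hu.1])]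
  ring_nf

lemma intervalIntegrable_pow_mul_one_sub_sq_rpow (hα : -1 < α) (n : ℕ) :
    IntervalIntegrable (fun u : ℝ => u ^ n * (1 - u ^ 2) ^ α) volume (-1) 1 := by
  have h01 := intervalIntegrable_one_sub_sq_rpow_zero_one hα
  have hm10 : IntervalIntegrable (fun u : ℝ => (1 - u ^ 2) ^ α) volume (-1) 0 := by
    simpa using (IntervalIntegrable.iff_comp_neg (by simp)).mp h01.symm
  exact (hm10.trans h01).continuousOn_mul (by fun_prop)

lemma integral_pow_mul_one_sub_sq_rpow_zero_one (hα : -1 < α) (n : ℕ) :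
    ∫ t in (0 : ℝ)..1, t ^ n * (1 - t ^ 2) ^ α
      = Gamma ((n + 1) / 2) * Gamma (α + 1) / (2 * Gamma ((n + 1) / 2 + (α + 1))) := by
  set g : ℝ → ℝ := fun x => x ^ (((n : ℝ) + 1) / 2 - 1) * (1 - x) ^ (α + 1 - 1)
  have hsubst := integral_image_eq_integral_abs_deriv_smul (s := Ioo (0 : ℝ) 1)
    (f' := fun t => 2 * t) measurableSet_Ioo
    (fun t _ => by simpa using (hasDerivAt_pow 2 t).hasDerivWithinAt)
    ((pow_left_strictMonoOn₀ two_ne_zero).injOn.mono fun t ht => le_of_lt ht.1) g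
  have hpt : EqOn (fun t : ℝ => |2 * t| • g (t ^ 2))
      (fun t => 2 * (t ^ n * (1 - t ^ 2) ^ α)) (Ioo 0 1) := by
    intro t ⟨ht0, _⟩
    have hpow : (t ^ 2) ^ (((n : ℝ) + 1) / 2 - 1) = t ^ (n : ℝ) / t := by
      rw [← Real.rpow_natCast t 2, ← Real.rpow_mul ht0.le, ← Real.rpow_sub_one ht0.ne']
      push_cast; ring_nf
    simp only [g, hpow, Real.rpow_natCast, add_sub_cancel_right, smul_eq_mul]
    rw [abs_of_pos (by linarith)]
    field_simp
  rw [image_sq_Ioo_zero_one, setIntegral_congr_fun measurableSet_Ioo hpt, integral_const_mul,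
    ← integral_Ioc_eq_integral_Ioo, ← integral_Ioc_eq_integral_Ioo,
    ← intervalIntegral.integral_of_le zero_le_one,
    ← intervalIntegral.integral_of_le zero_le_one,
    integral_rpow_mul_one_sub_rpow (by positivity) (by linarith)] at hsubst
  rw [mul_comm 2, ← div_div, hsubst]
  ring

lemma integral_pow_mul_one_sub_sq_rpow_of_odd {n : ℕ} (hn : Odd n) :
    ∫ u in (-1 : ℝ)..1, u ^ n * (1 - u ^ 2) ^ α = 0 := by
  have h := intervalIntegral.integral_comp_neg (a := -1) (b := 1)
    (fun u : ℝ => u ^ n * (1 - u ^ 2) ^ α)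
  simp only [neg_neg, hn.neg_pow, neg_sq, neg_mul, intervalIntegral.integral_neg] at h
  linarith

lemma integral_pow_mul_one_sub_sq_rpow_of_even (hα : -1 < α) {n : ℕ} (hn : Even n) :
    ∫ u in (-1 : ℝ)..1, u ^ n * (1 - u ^ 2) ^ α
      = Gamma ((n + 1) / 2) * Gamma (α + 1) / Gamma ((n + 1) / 2 + (α + 1)) := by
  have hint := intervalIntegrable_pow_mul_one_sub_sq_rpow hα n
  have hreflect := intervalIntegral.integral_comp_neg (a := 0) (b := 1)
    (fun u : ℝ => u ^ n * (1 - u ^ 2) ^ α)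
  simp only [neg_zero, hn.neg_pow, neg_sq] at hreflect
  rw [← intervalIntegral.integral_add_adjacent_intervals (b := 0)
    (hint.mono_set (by simp [uIcc_of_le, Icc_subset_Icc]))
    (hint.mono_set (by simp [uIcc_of_le, Icc_subset_Icc])), ← hreflect,
    integral_pow_mul_one_sub_sq_rpow_zero_one hα]
  ring

lemma hasSum_integral_pow_mul_exp_mul_one_sub_sq_rpow (hα : -1 < α) (c : ℝ) (k : ℕ) :
    HasSum (fun n : ℕ => c ^ n / n ! * ∫ u in (-1 : ℝ)..1, u ^ (n + k) * (1 - u ^ 2) ^ α)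
      (∫ u in (-1 : ℝ)..1, u ^ k * exp (c * u) * (1 - u ^ 2) ^ α) := by
  have hw := intervalIntegrable_pow_mul_one_sub_sq_rpow hα 0
  simp only [pow_zero, one_mul] at hw
  simp_rw [← intervalIntegral.integral_const_mul]
  refine intervalIntegral.hasSum_integral_of_dominated_convergence
    (fun n u => |c| ^ n / n ! * (1 - u ^ 2) ^ α) (fun n => by fun_prop) ?_ ?_ ?_ ?_
  · refine fun n => ae_of_all _ fun u hu => ?_
    rw [uIoc_of_le (by norm_num)] at hu
    have hu1 : |u| ≤ 1 := abs_le.2 ⟨hu.1.le, hu.2⟩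
    have hw0 : 0 ≤ (1 - u ^ 2) ^ α := rpow_nonneg (by nlinarith [abs_nonneg u, sq_abs u]) α
    simp only [norm_mul, norm_div, norm_pow, Real.norm_eq_abs, Nat.abs_cast, abs_of_nonneg hw0]
    gcongr
    exact mul_le_of_le_one_left hw0 (pow_le_one₀ (abs_nonneg u) hu1)
  · exact ae_of_all _ fun u _ => (summable_pow_div_factorial |c|).mul_right _
  · simp_rw [tsum_mul_right]
    exact hw.const_mul _
  · refine ae_of_all _ fun u _ => ?_
    have h := (NormedSpace.expSeries_div_hasSum_exp (c * u)).mul_right (u ^ k * (1 - u ^ 2) ^ α)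
    rw [← exp_eq_exp_ℝ] at h
    have hterm : ∀ n : ℕ, c ^ n / n ! * (u ^ (n + k) * (1 - u ^ 2) ^ α)
        = (c * u) ^ n / n ! * (u ^ k * (1 - u ^ 2) ^ α) := fun n => by ring
    simp_rw [hterm]
    rwa [mul_left_comm, ← mul_assoc] at h

end Moments

lemma pow_div_factorial_mul_moment_eq {α c : ℝ} (hα : -1 < α) (hc : 0 < c) {m k : ℕ}
    (hk : k ≤ 1) :
    c ^ (2 * m + k) / (2 * m + k)! *
        (Gamma (m + k + 1 / 2) * Gamma (α + 1) / Gamma (m + k + 1 / 2 + (α + 1)))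
      = √π * Gamma (α + 1) / (c / 2) ^ (α + 1 / 2) *
        ((c / 2) ^ (2 * (m : ℝ) + (α + 1 / 2 + k)) /
          (m ! * Gamma (m + (α + 1 / 2 + k) + 1))) := by
  have hpow : (c / 2) ^ (2 * (m : ℝ) + (α + 1 / 2 + k))
      = c ^ (2 * m + k) / 2 ^ (2 * m + k) * (c / 2) ^ (α + 1 / 2) := by
    rw [show 2 * (m : ℝ) + (α + 1 / 2 + k) = ((2 * m + k : ℕ) : ℝ) + (α + 1 / 2) by
        push_cast; ring,
      rpow_add (by positivity), rpow_natCast, div_pow]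
  have harg : (m : ℝ) + (α + 1 / 2 + k) + 1 = m + k + 1 / 2 + (α + 1) := by ring
  have hΓ : 0 < Gamma (m + k + 1 / 2 + (α + 1)) :=
    Gamma_pos_of_pos (add_pos (by positivity) (by linarith))
  have hx : 0 < (c / 2) ^ (α + 1 / 2) := rpow_pos_of_pos (by positivity) _
  have hdup := Gamma_nat_add_half_mul_factorial (m := m) hk
  rw [hpow, harg]
  generalize Gamma (m + k + 1 / 2 + (α + 1)) = B at *
  generalize Gamma (m + k + 1 / 2) = A at *
  field_simp
  linear_combination Gamma (α + 1) * hdup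

theorem integral_pow_mul_exp_mul_one_sub_sq_rpow_eq_besselI {α c : ℝ} (hα : -1 < α)
    (hc : 0 < c) {k : ℕ} (hk : k ≤ 1) :
    ∫ u in (-1 : ℝ)..1, u ^ k * exp (c * u) * (1 - u ^ 2) ^ α
      = √π * Gamma (α + 1) / (c / 2) ^ (α + 1 / 2) * besselI (α + 1 / 2 + k) c := by
  have hs := hasSum_integral_pow_mul_exp_mul_one_sub_sq_rpow hα c k
  have hinj : Function.Injective fun m : ℕ => 2 * m + k := fun a b h => by
    simp only at h; omega
  have hodd : ∀ n ∉ range fun m : ℕ => 2 * m + k,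
      c ^ n / n ! * ∫ u in (-1 : ℝ)..1, u ^ (n + k) * (1 - u ^ 2) ^ α = 0 := by
    intro n hn
    rw [integral_pow_mul_one_sub_sq_rpow_of_odd, mul_zero]
    by_contra heven
    obtain ⟨j, hj⟩ := Nat.not_odd_iff_even.mp heven
    exact hn ⟨j - k, show 2 * (j - k) + k = n by omega⟩
  rw [← hinj.hasSum_iff hodd] at hs
  rw [← hs.tsum_eq, besselI, ← tsum_mul_left]
  refine tsum_congr fun m => ?_
  have hcast : (((2 * m + k + k : ℕ) : ℝ) + 1) / 2 = m + k + 1 / 2 := by push_cast; ring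
  rw [Function.comp_apply, integral_pow_mul_one_sub_sq_rpow_of_even hα ⟨m + k, by ring⟩, hcast]
  exact pow_div_factorial_mul_moment_eq hα hc hk

theorem stmt_7 (N : ℕ) (hN : 2 ≤ N) (c : ℝ) (hc : 0 < c) :
    (∫ u in (-1 : ℝ)..1, u * Real.exp (c * u) * (1 - u ^ 2) ^ (((N : ℝ) - 3) / 2)) /
        (∫ u in (-1 : ℝ)..1, Real.exp (c * u) * (1 - u ^ 2) ^ (((N : ℝ) - 3) / 2))
      = besselI ((N : ℝ) / 2) c / besselI ((N : ℝ) / 2 - 1) c := by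
  have hα : -1 < ((N : ℝ) - 3) / 2 := by
    have : (2 : ℝ) ≤ N := by exact_mod_cast hN
    linarith
  have hM := integral_pow_mul_exp_mul_one_sub_sq_rpow_eq_besselI hα hc (k := 1) le_rfl
  have hD := integral_pow_mul_exp_mul_one_sub_sq_rpow_eq_besselI hα hc (k := 0) zero_le_one
  simp only [pow_one, pow_zero, one_mul, Nat.cast_one, Nat.cast_zero, add_zero] at hM hD
  rw [hM, hD, show ((N : ℝ) - 3) / 2 + 1 / 2 + 1 = N / 2 by ring,
    show ((N : ℝ) - 3) / 2 + 1 / 2 = N / 2 - 1 by ring]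
  refine mul_div_mul_left _ _ (div_pos (mul_pos (sqrt_pos.2 pi_pos) ?_) ?_).ne'
  · exact Gamma_pos_of_pos (by linarith)
  · exact rpow_pos_of_pos (by positivity) _
end

section
/- Let N ≥ 2 and β > N. Then the functional F(ν) = H(ν|μ) - (β/2)|∫ x dν(x)|² over probability measures ν on S^{N-1} has infimum strictly less than 0; in particular the uniform measure μ is not the minimizer. -/
open MeasureTheory Real Filter Set

/-- The uniform probability measure on the unit sphere in `R^N`. -/
noncomputable def sphereUniform (N : ℕ) :
    Measure (Metric.sphere (0 : EuclideanSpace ℝ (Fin N)) 1) :=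
  (((volume : Measure (EuclideanSpace ℝ (Fin N))).toSphere Set.univ)⁻¹) •
    (volume : Measure (EuclideanSpace ℝ (Fin N))).toSphere

open Classical in
/-- Relative entropy `H(ν | μ) = ∫ (dν/dμ) log (dν/dμ) dμ` when the density exists
(with value `⊤` otherwise or when the integral diverges). -/
noncomputable def relEntropy {α : Type*} [MeasurableSpace α] (ν μ : Measure α) : EReal :=
  if ν ≪ μ ∧ Integrable (llr ν μ) ν then ((∫ x, llr ν μ x ∂ν : ℝ) : EReal) else ⊤

/-!
Tilt `μ` linearly along a coordinate: `ν_b = (1 + b xᵢ) μ` for small `b > 0`. The symmetries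
`x ↦ -x` and `xᵢ ↔ xⱼ` of `μ` give `∫ xᵢ dμ = 0` and `∫ xᵢ² dμ = 1/N`. Hence the mean of `ν_b` has
`i`-th coordinate `b/N`, while `(1 + u) log (1 + u) ≤ u + u²/2 + O(|u|³)` gives
`H(ν_b | μ) ≤ b²/(2N) + O(b³)`. So `F(ν_b) ≤ (b²/(2N)) (1 - β/N) + O(b³) < 0` once `b` is small.
-/

open Metric
open scoped Pointwise

section WithDensity

variable {α : Type*} [MeasurableSpace α] {μ : Measure α} {F : α → ℝ}

lemma isProbabilityMeasure_withDensity_ofReal (hF : Integrable F μ) (hF0 : 0 ≤ᵐ[μ] F)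
    (h1 : ∫ x, F x ∂μ = 1) : IsProbabilityMeasure (μ.withDensity fun x => ENNReal.ofReal (F x)) :=
  ⟨by rw [withDensity_apply _ MeasurableSet.univ, setLIntegral_univ,
    ← ofReal_integral_eq_lintegral_ofReal hF hF0, h1, ENNReal.ofReal_one]⟩

lemma integral_withDensity_ofReal {E : Type*} [NormedAddCommGroup E] [NormedSpace ℝ E]
    (hF : Measurable F) (hF0 : ∀ x, 0 ≤ F x) (g : α → E) :
    ∫ x, g x ∂μ.withDensity (fun x => ENNReal.ofReal (F x)) = ∫ x, F x • g x ∂μ := by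
  rw [integral_withDensity_eq_integral_toReal_smul hF.ennreal_ofReal
    (ae_of_all _ fun _ => ENNReal.ofReal_lt_top)]
  simp_rw [ENNReal.toReal_ofReal (hF0 _)]

lemma relEntropy_withDensity_ofReal [SigmaFinite μ] (hF : Measurable F) (hF0 : ∀ x, 0 ≤ F x)
    (hint : Integrable (fun x => F x * log (F x)) μ) :
    relEntropy (μ.withDensity fun x => ENNReal.ofReal (F x)) μ =
      ((∫ x, F x * log (F x) ∂μ : ℝ) : EReal) := by
  set ν := μ.withDensity fun x => ENNReal.ofReal (F x)
  have hac : ν ≪ μ := withDensity_absolutelyContinuous _ _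
  have hdens : (fun x => (ν.rnDeriv μ x).toReal * log (ν.rnDeriv μ x).toReal) =ᵐ[μ]
      fun x => F x * log (F x) := by
    filter_upwards [Measure.rnDeriv_withDensity μ hF.ennreal_ofReal] with x hx
    rw [hx, ENNReal.toReal_ofReal (hF0 x)]
  rw [relEntropy, if_pos ⟨hac, (integrable_rnDeriv_mul_log_iff hac).1 (hint.congr hdens.symm)⟩,
    ← integral_rnDeriv_mul_log hac, integral_congr_ae hdens]

end WithDensity

lemma mul_log_one_add_le {u : ℝ} (hu : |u| ≤ 1 / 2) :
    (1 + u) * log (1 + u) ≤ u + u ^ 2 / 2 + 4 * |u| ^ 3 := by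
  have hseries := abs_log_sub_add_sum_range_le (x := -u) (by rw [abs_neg]; linarith) 2
  simp only [Finset.sum_range_succ, Finset.sum_range_zero, abs_neg, sub_neg_eq_add] at hseries
  have hrem : |u| ^ 3 / (1 - |u|) ≤ 2 * |u| ^ 3 := by
    rw [div_le_iff₀ (by linarith)]
    nlinarith [pow_nonneg (abs_nonneg u) 3]
  have hlog : log (1 + u) ≤ u - u ^ 2 / 2 + 2 * |u| ^ 3 := by
    have := (abs_le.1 (hseries.trans hrem)).2
    norm_num at this
    linarith
  obtain ⟨hu₁, hu₂⟩ := abs_le.1 hu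
  have hcube : -|u| ^ 3 ≤ u ^ 3 := by rw [← abs_pow]; exact neg_abs_le _
  calc (1 + u) * log (1 + u) ≤ (1 + u) * (u - u ^ 2 / 2 + 2 * |u| ^ 3) :=
        mul_le_mul_of_nonneg_left hlog (by linarith)
    _ ≤ u + u ^ 2 / 2 + 4 * |u| ^ 3 := by nlinarith [pow_nonneg (abs_nonneg u) 3]

namespace LinearIsometryEquiv

variable {E : Type*} [NormedAddCommGroup E] [NormedSpace ℝ E]

def sphereMap (f : E ≃ₗᵢ[ℝ] E) : sphere (0 : E) 1 → sphere (0 : E) 1 :=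
  Subtype.map f fun x hx => by simpa using hx

@[simp]
lemma coe_sphereMap (f : E ≃ₗᵢ[ℝ] E) (x : sphere (0 : E) 1) : (f.sphereMap x : E) = f x := rfl

lemma continuous_sphereMap (f : E ≃ₗᵢ[ℝ] E) : Continuous f.sphereMap :=
  f.continuous.subtype_map _

lemma injective_sphereMap (f : E ≃ₗᵢ[ℝ] E) : Function.Injective f.sphereMap :=
  fun _ _ h => Subtype.ext (f.injective (congrArg Subtype.val h))

lemma image_val_preimage_sphereMap (f : E ≃ₗᵢ[ℝ] E) (s : Set (sphere (0 : E) 1)) :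
    Subtype.val '' (f.sphereMap ⁻¹' s) = f ⁻¹' (Subtype.val '' s) := by
  ext x
  constructor
  · rintro ⟨y, hy, rfl⟩
    exact ⟨_, hy, rfl⟩
  · rintro ⟨y, hy, hxy⟩
    have hx : x ∈ sphere (0 : E) 1 := by
      rw [mem_sphere_zero_iff_norm, ← f.norm_map, ← hxy]
      exact mem_sphere_zero_iff_norm.1 y.2
    exact ⟨⟨x, hx⟩, by
      rwa [mem_preimage, show f.sphereMap ⟨x, hx⟩ = y from Subtype.ext hxy.symm], rfl⟩

lemma preimage_smul_set (f : E ≃ₗᵢ[ℝ] E) (t : Set ℝ) (A : Set E) :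
    f ⁻¹' (t • A) = t • f ⁻¹' A := by
  ext x
  constructor
  · rintro ⟨c, hc, a, ha, hax⟩
    exact ⟨c, hc, f.symm a, by simpa using ha, f.injective (by simpa using hax)⟩
  · rintro ⟨c, hc, y, hy, rfl⟩
    exact ⟨c, hc, f y, hy, (f.map_smul c y).symm⟩

variable [MeasurableSpace E] [BorelSpace E]

lemma measurePreserving_sphereMap {μ : Measure E} (f : E ≃ₗᵢ[ℝ] E)
    (hf : MeasurePreserving f μ μ) : MeasurePreserving f.sphereMap μ.toSphere μ.toSphere := by
  refine ⟨f.continuous_sphereMap.measurable, ?_⟩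
  ext s hs
  rw [Measure.map_apply f.continuous_sphereMap.measurable hs,
    Measure.toSphere_apply' _ (hs.preimage f.continuous_sphereMap.measurable),
    Measure.toSphere_apply' _ hs, image_val_preimage_sphereMap, ← preimage_smul_set,
    hf.measure_preimage_emb f.toHomeomorph.measurableEmbedding]

end LinearIsometryEquiv

section Sphere

variable {N : ℕ}

local notation "ℝᴺ" => EuclideanSpace ℝ (Fin N)
local notation "𝕊" => sphere (0 : ℝᴺ) 1

instance [NeZero N] : IsProbabilityMeasure (sphereUniform N) :=
  ⟨by rw [sphereUniform, Measure.smul_apply, smul_eq_mul,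
    ENNReal.inv_mul_cancel (Measure.measure_univ_ne_zero.2 (Measure.toSphere_ne_zero _))
      (measure_ne_top _ _)]⟩

lemma measurePreserving_sphereMap_sphereUniform (f : ℝᴺ ≃ₗᵢ[ℝ] ℝᴺ) :
    MeasurePreserving f.sphereMap (sphereUniform N) (sphereUniform N) := by
  have h := f.measurePreserving_sphereMap f.measurePreserving
  exact ⟨h.measurable, by rw [sphereUniform, Measure.map_smul, h.map_eq]⟩

lemma integral_comp_sphereMap {G : Type*} [NormedAddCommGroup G] [NormedSpace ℝ G]
    (f : ℝᴺ ≃ₗᵢ[ℝ] ℝᴺ) (g : 𝕊 → G) :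
    ∫ x, g (f.sphereMap x) ∂sphereUniform N = ∫ x, g x ∂sphereUniform N :=
  (measurePreserving_sphereMap_sphereUniform f).integral_comp
    ((f.continuous_sphereMap.isClosedEmbedding f.injective_sphereMap).measurableEmbedding) g

@[fun_prop]
lemma continuous_sphere_coord (i : Fin N) : Continuous fun x : 𝕊 => (x : ℝᴺ) i :=
  (EuclideanSpace.proj i).continuous.comp continuous_subtype_val

lemma integrable_sphereUniform_of_continuous [NeZero N] {g : 𝕊 → ℝ} (hg : Continuous g) :
    Integrable g (sphereUniform N) :=
  hg.integrable_of_hasCompactSupport (HasCompactSupport.of_compactSpace g)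

lemma integrable_sphereUniform_coord [NeZero N] (i : Fin N) :
    Integrable (fun x : 𝕊 => (x : ℝᴺ) i) (sphereUniform N) :=
  integrable_sphereUniform_of_continuous (continuous_sphere_coord i)

lemma integrable_sphereUniform_coord_sq [NeZero N] (i : Fin N) :
    Integrable (fun x : 𝕊 => (x : ℝᴺ) i ^ 2) (sphereUniform N) :=
  integrable_sphereUniform_of_continuous ((continuous_sphere_coord i).pow 2)

lemma integral_sphereUniform_coord (i : Fin N) : ∫ x : 𝕊, (x : ℝᴺ) i ∂sphereUniform N = 0 := by
  have h := integral_comp_sphereMap (LinearIsometryEquiv.neg ℝ) fun x : 𝕊 => (x : ℝᴺ) i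
  simp only [LinearIsometryEquiv.coe_sphereMap, LinearIsometryEquiv.coe_neg, PiLp.neg_apply,
    integral_neg] at h
  linarith

lemma integral_sphereUniform_coord_sq_eq (i j : Fin N) :
    ∫ x : 𝕊, (x : ℝᴺ) i ^ 2 ∂sphereUniform N = ∫ x : 𝕊, (x : ℝᴺ) j ^ 2 ∂sphereUniform N := by
  have h := integral_comp_sphereMap (LinearIsometryEquiv.piLpCongrLeft 2 ℝ ℝ (Equiv.swap i j))
    fun x : 𝕊 => (x : ℝᴺ) i ^ 2
  simpa [LinearIsometryEquiv.piLpCongrLeft_apply] using h.symm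

lemma sum_sq_coord_sphere (x : 𝕊) : ∑ i, (x : ℝᴺ) i ^ 2 = 1 := by
  simpa using (EuclideanSpace.sphere_zero_eq 1 zero_le_one).subset x.2

lemma abs_coord_le_one_of_sphere (x : 𝕊) (i : Fin N) : |(x : ℝᴺ) i| ≤ 1 :=
  (PiLp.norm_apply_le (x : ℝᴺ) i).trans (norm_eq_of_mem_sphere x).le

lemma integral_sphereUniform_coord_sq (i : Fin N) :
    ∫ x : 𝕊, (x : ℝᴺ) i ^ 2 ∂sphereUniform N = 1 / N := by
  have : NeZero N := NeZero.of_pos i.pos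
  have hsum : ∑ j : Fin N, ∫ x : 𝕊, (x : ℝᴺ) j ^ 2 ∂sphereUniform N = 1 := by
    rw [← integral_finsetSum _ fun j _ => integrable_sphereUniform_coord_sq j]
    simp [sum_sq_coord_sphere]
  simp only [integral_sphereUniform_coord_sq_eq _ i, Finset.sum_const, Finset.card_univ,
    Fintype.card_fin, nsmul_eq_mul] at hsum
  rw [eq_div_iff (NeZero.ne _), mul_comm, hsum]

lemma integral_sphereUniform_quadratic (i : Fin N) (d a c : ℝ) :
    ∫ x : 𝕊, d + a * (x : ℝᴺ) i + c * (x : ℝᴺ) i ^ 2 ∂sphereUniform N = d + c / N := by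
  have : NeZero N := NeZero.of_pos i.pos
  have hlin : Integrable (fun x : 𝕊 => d + a * (x : ℝᴺ) i) (sphereUniform N) :=
    (integrable_const d).add ((integrable_sphereUniform_coord i).const_mul a)
  rw [integral_add hlin ((integrable_sphereUniform_coord_sq i).const_mul c),
    integral_add (integrable_const d) ((integrable_sphereUniform_coord i).const_mul a),
    integral_const_mul, integral_const_mul, integral_sphereUniform_coord,
    integral_sphereUniform_coord_sq]
  simp [div_eq_mul_inv]

noncomputable def sphereTilt (N : ℕ) (i : Fin N) (b : ℝ) :
    Measure (sphere (0 : EuclideanSpace ℝ (Fin N)) 1) :=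
  (sphereUniform N).withDensity fun x => ENNReal.ofReal (1 + b * (x : EuclideanSpace ℝ (Fin N)) i)

variable {i : Fin N} {b : ℝ}

lemma continuous_one_add_mul_coord : Continuous fun x : 𝕊 => 1 + b * (x : ℝᴺ) i := by
  fun_prop

lemma one_add_mul_coord_pos (hb : |b| < 1) (x : 𝕊) : 0 < 1 + b * (x : ℝᴺ) i := by
  have : |b * (x : ℝᴺ) i| < 1 := by
    rw [abs_mul]
    exact mul_lt_one_of_nonneg_of_lt_one_left (abs_nonneg b) hb (abs_coord_le_one_of_sphere x i)
  linarith [(abs_lt.1 this).1]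

lemma isProbabilityMeasure_sphereTilt (hb : |b| < 1) :
    IsProbabilityMeasure (sphereTilt N i b) := by
  have : NeZero N := NeZero.of_pos i.pos
  refine isProbabilityMeasure_withDensity_ofReal
    (integrable_sphereUniform_of_continuous continuous_one_add_mul_coord)
    (ae_of_all _ (fun x => (one_add_mul_coord_pos hb x).le)) ?_
  simpa using integral_sphereUniform_quadratic i 1 b 0

lemma inner_single_integral_sphereTilt (hb : |b| < 1) :
    inner ℝ (EuclideanSpace.single i 1) (∫ θ : 𝕊, (θ : ℝᴺ) ∂sphereTilt N i b) = b / N := by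
  have : NeZero N := NeZero.of_pos i.pos
  have := isProbabilityMeasure_sphereTilt (i := i) hb
  rw [← integral_inner (continuous_subtype_val.integrable_of_hasCompactSupport
      (HasCompactSupport.of_compactSpace _)), sphereTilt,
    integral_withDensity_ofReal continuous_one_add_mul_coord.measurable
      (fun x => (one_add_mul_coord_pos hb x).le)]
  simp only [EuclideanSpace.inner_single_left, map_one, one_mul, smul_eq_mul]
  calc _ = ∫ x : 𝕊, 0 + 1 * (x : ℝᴺ) i + b * (x : ℝᴺ) i ^ 2 ∂sphereUniform N := by
        congr 1 with x; ring
    _ = b / N := by rw [integral_sphereUniform_quadratic, zero_add]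

lemma div_le_norm_integral_sphereTilt (hb : |b| < 1) :
    b / N ≤ ‖∫ θ : 𝕊, (θ : ℝᴺ) ∂sphereTilt N i b‖ := by
  simpa [inner_single_integral_sphereTilt hb] using
    real_inner_le_norm (EuclideanSpace.single i (1 : ℝ)) (∫ θ : 𝕊, (θ : ℝᴺ) ∂sphereTilt N i b)

lemma relEntropy_sphereTilt_le (hb : |b| ≤ 1 / 2) :
    relEntropy (sphereTilt N i b) (sphereUniform N) ≤
      ((b ^ 2 / (2 * N) + 4 * |b| ^ 3 : ℝ) : EReal) := by
  have : NeZero N := NeZero.of_pos i.pos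
  have hpos : ∀ x : 𝕊, 0 < 1 + b * (x : ℝᴺ) i := one_add_mul_coord_pos (by linarith)
  have hent : Integrable (fun x : 𝕊 => (1 + b * (x : ℝᴺ) i) * log (1 + b * (x : ℝᴺ) i))
      (sphereUniform N) :=
    integrable_sphereUniform_of_continuous
      (continuous_one_add_mul_coord.mul (continuous_one_add_mul_coord.log fun x => (hpos x).ne'))
  have hpt : ∀ x : 𝕊, (1 + b * (x : ℝᴺ) i) * log (1 + b * (x : ℝᴺ) i) ≤
      4 * |b| ^ 3 + b * (x : ℝᴺ) i + b ^ 2 / 2 * (x : ℝᴺ) i ^ 2 := by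
    intro x
    have hbx : |b * (x : ℝᴺ) i| ≤ |b| := by
      rw [abs_mul]
      exact mul_le_of_le_one_right (abs_nonneg b) (abs_coord_le_one_of_sphere x i)
    have := mul_log_one_add_le (hbx.trans hb)
    have := pow_le_pow_left₀ (abs_nonneg _) hbx 3
    nlinarith
  rw [sphereTilt, relEntropy_withDensity_ofReal continuous_one_add_mul_coord.measurable
    (fun x => (hpos x).le) hent, EReal.coe_le_coe_iff]
  calc _ ≤ ∫ x : 𝕊, 4 * |b| ^ 3 + b * (x : ℝᴺ) i + b ^ 2 / 2 * (x : ℝᴺ) i ^ 2 ∂sphereUniform N :=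
        integral_mono hent (integrable_sphereUniform_of_continuous (by fun_prop)) hpt
    _ = _ := by rw [integral_sphereUniform_quadratic]; ring

end Sphere

theorem stmt_10 (N : ℕ) (hN : 2 ≤ N) (β : ℝ) (hβ : (N : ℝ) < β) :
    ∃ ν : Measure (Metric.sphere (0 : EuclideanSpace ℝ (Fin N)) 1),
      IsProbabilityMeasure ν ∧
      relEntropy ν (sphereUniform N) <
        ((β / 2 * ‖∫ θ : Metric.sphere (0 : EuclideanSpace ℝ (Fin N)) 1,
          (θ : EuclideanSpace ℝ (Fin N)) ∂ν‖ ^ 2 : ℝ) : EReal) := by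
  have hN0 : (0 : ℝ) < N := by exact_mod_cast (by omega : 0 < N)
  set b : ℝ := min (1 / 2) ((β - N) / (16 * N ^ 2))
  have hb0 : 0 < b := lt_min (by norm_num) (div_pos (by linarith) (by positivity))
  have hb : |b| ≤ 1 / 2 := by rw [abs_of_pos hb0]; exact min_le_left _ _
  have hbβ : 16 * N ^ 2 * b ≤ β - N := by
    rw [← le_div_iff₀' (by positivity)]; exact min_le_right _ _
  let i : Fin N := ⟨0, by omega⟩
  refine ⟨sphereTilt N i b, isProbabilityMeasure_sphereTilt (by linarith),
    (relEntropy_sphereTilt_le hb).trans_lt (EReal.coe_lt_coe_iff.2 ?_)⟩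
  calc b ^ 2 / (2 * N) + 4 * |b| ^ 3 < β / 2 * (b / N) ^ 2 := by
        have hlhs :
            b ^ 2 / (2 * N) + 4 * |b| ^ 3 = b ^ 2 / (2 * N ^ 2) * (N + 8 * N ^ 2 * b) := by
          rw [abs_of_pos hb0]; field_simp; ring
        have hrhs : β / 2 * (b / N) ^ 2 = b ^ 2 / (2 * N ^ 2) * β := by field_simp
        rw [hlhs, hrhs]
        exact mul_lt_mul_of_pos_left (by nlinarith) (by positivity)
    _ ≤ _ := by gcongr; exacts [by linarith, div_le_norm_integral_sphereTilt (by linarith)]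
end

section
/- With p and f = f_h as in the Stein equation for the critical density (k̃ = 1/(4N²(N+2))), if h is bounded then f is bounded; specifically there is a constant C(N) depending only on N such that ‖f‖_∞ ≤ C(N)‖h‖_∞. -/
open MeasureTheory Real Filter Set

/-- Normalizing constant of the critical density. -/
noncomputable def critZ (N : ℕ) : ℝ :=
  ∫ t in Set.Ioi (0 : ℝ),
    t ^ (((N : ℝ) - 2) / 2) * Real.exp (-(t ^ 2) / (4 * (N : ℝ) ^ 2 * ((N : ℝ) + 2)))

/-- The critical limiting density `p(t) = z⁻¹ t^{(N-2)/2} e^{-t²/(4N²(N+2))}` for `t > 0`. -/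
noncomputable def criticalDensity (N : ℕ) (t : ℝ) : ℝ :=
  if 0 < t then
    t ^ (((N : ℝ) - 2) / 2) * Real.exp (-(t ^ 2) / (4 * (N : ℝ) ^ 2 * ((N : ℝ) + 2))) / critZ N
  else 0

/-!
Since `(h - E h) p` has total integral zero, `∫₀ᵗ (h - E h) p = -∫ₜ^∞ (h - E h) p`, so its
absolute value is at most `2 ‖h‖_∞` times the smaller of the masses `∫₀ᵗ p` and `∫ₜ^∞ p`.
For `p(s) ∝ s^a e^{-s²/D}` the first is at most `e^{t²/D} t p(t)`, which is good for bounded `t`;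
once `t ≥ max(1, (a + 1) D / 2)` the density decays at least like `e^{-(s - t)}` beyond `t`,
so the second is at most `p(t) ≤ t p(t)`.
-/

section Centered

variable {α : Type*} [MeasurableSpace α] {μ : Measure α} {p h : α → ℝ} {M : ℝ}

theorem abs_integral_mul_le_of_abs_le (hM : ∀ x, |h x| ≤ M) (hp : ∀ x, 0 ≤ p x)
    (hpi : Integrable p μ) : |∫ x, h x * p x ∂μ| ≤ M * ∫ x, p x ∂μ := by
  rw [← integral_const_mul M p, ← Real.norm_eq_abs]
  refine norm_integral_le_of_norm_le (hpi.const_mul M) (Eventually.of_forall fun x => ?_)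
  rw [norm_mul, Real.norm_eq_abs, Real.norm_eq_abs, abs_of_nonneg (hp x)]
  exact mul_le_mul_of_nonneg_right (hM x) (hp x)

theorem abs_sub_integral_mul_le (hM : ∀ x, |h x| ≤ M) (hp : ∀ x, 0 ≤ p x)
    (hpi : Integrable p μ) (hp1 : ∫ x, p x ∂μ = 1) (x : α) :
    |h x - ∫ y, h y * p y ∂μ| ≤ 2 * M := by
  have hmean := abs_integral_mul_le_of_abs_le hM hp hpi
  rw [hp1, mul_one] at hmean
  linarith [abs_sub (h x) (∫ y, h y * p y ∂μ), hM x]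

theorem abs_setIntegral_centered_mul_le (hM : ∀ x, |h x| ≤ M) (hp : ∀ x, 0 ≤ p x)
    (hpi : Integrable p μ) (hp1 : ∫ x, p x ∂μ = 1) (s : Set α) :
    |∫ x in s, (h x - ∫ y, h y * p y ∂μ) * p x ∂μ| ≤ 2 * M * ∫ x in s, p x ∂μ := by
  exact abs_integral_mul_le_of_abs_le (abs_sub_integral_mul_le hM hp hpi hp1) hp
    hpi.integrableOn

theorem integral_centered_mul_eq_zero (hh : AEStronglyMeasurable h μ) (hM : ∀ x, |h x| ≤ M)
    (hpi : Integrable p μ) (hp1 : ∫ x, p x ∂μ = 1) :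
    ∫ x, (h x - ∫ y, h y * p y ∂μ) * p x ∂μ = 0 := by
  have hhp : Integrable (fun x => h x * p x) μ :=
    hpi.bdd_mul hh (Eventually.of_forall fun x => (Real.norm_eq_abs _).le.trans (hM x))
  simp_rw [sub_mul]
  rw [integral_sub hhp (hpi.const_mul _), integral_const_mul, hp1, mul_one, sub_self]

theorem abs_setIntegral_centered_mul_le_compl (hh : AEStronglyMeasurable h μ)
    (hM : ∀ x, |h x| ≤ M) (hp : ∀ x, 0 ≤ p x) (hpi : Integrable p μ) (hp1 : ∫ x, p x ∂μ = 1)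
    {s : Set α} (hs : MeasurableSet s) :
    |∫ x in s, (h x - ∫ y, h y * p y ∂μ) * p x ∂μ| ≤ 2 * M * ∫ x in sᶜ, p x ∂μ := by
  have hF : Integrable (fun x => (h x - ∫ y, h y * p y ∂μ) * p x) μ :=
    hpi.bdd_mul (hh.sub aestronglyMeasurable_const)
      (Eventually.of_forall fun x => (Real.norm_eq_abs _).le.trans
        (abs_sub_integral_mul_le hM hp hpi hp1 x))
  have hsplit := integral_add_compl hs hF
  rw [integral_centered_mul_eq_zero hh hM hpi hp1, add_eq_zero_iff_eq_neg] at hsplit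
  rw [hsplit, abs_neg]
  exact abs_setIntegral_centered_mul_le hM hp hpi hp1 sᶜ

end Centered

noncomputable def powGaussian (a D s : ℝ) : ℝ :=
  s ^ a * exp (-(s ^ 2) / D)

section PowGaussian

variable {a D : ℝ}

theorem powGaussian_pos {s : ℝ} (hs : 0 < s) : 0 < powGaussian a D s :=
  mul_pos (rpow_pos_of_pos hs a) (exp_pos _)

theorem integrableOn_powGaussian (ha : -1 < a) (hD : 0 < D) :
    IntegrableOn (powGaussian a D) (Ioi 0) := by
  refine (integrableOn_rpow_mul_exp_neg_mul_sq (inv_pos.2 hD) ha).congr_fun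
    (fun x _ => ?_) measurableSet_Ioi
  beta_reduce
  rw [neg_mul, powGaussian, neg_div, div_eq_inv_mul]

theorem rpow_eq_exp_mul_powGaussian (t : ℝ) :
    t ^ a = exp (t ^ 2 / D) * powGaussian a D t := by
  rw [powGaussian, neg_div, mul_left_comm, ← exp_add, add_neg_cancel, exp_zero, mul_one]

theorem powGaussian_le_rpow (ha : 0 ≤ a) (hD : 0 ≤ D) {x t : ℝ} (hx : 0 ≤ x) (hxt : x ≤ t) :
    powGaussian a D x ≤ t ^ a := by
  have hexp : exp (-(x ^ 2) / D) ≤ 1 :=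
    exp_le_one_iff.2 (div_nonpos_of_nonpos_of_nonneg (neg_nonpos.2 (sq_nonneg x)) hD)
  calc powGaussian a D x ≤ t ^ a * 1 :=
        mul_le_mul (rpow_le_rpow hx hxt ha) hexp (exp_pos _).le (rpow_nonneg (hx.trans hxt) a)
    _ = t ^ a := mul_one _

theorem setIntegral_Ioc_powGaussian_le (ha : 0 ≤ a) (hD : 0 ≤ D) {t : ℝ} (ht : 0 ≤ t) :
    ∫ s in Ioc 0 t, powGaussian a D s ≤ exp (t ^ 2 / D) * (t * powGaussian a D t) := by
  have hbound : ∀ s ∈ Ioc 0 t, ‖powGaussian a D s‖ ≤ t ^ a := fun s hs => by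
    rw [Real.norm_eq_abs, abs_of_pos (powGaussian_pos hs.1)]
    exact powGaussian_le_rpow ha hD hs.1.le hs.2
  have := norm_setIntegral_le_of_norm_le_const (μ := volume) measure_Ioc_lt_top hbound
  rw [Real.volume_real_Ioc_of_le ht, sub_zero, rpow_eq_exp_mul_powGaussian (D := D)] at this
  linarith [le_abs_self (∫ s in Ioc 0 t, powGaussian a D s), Real.norm_eq_abs
    (∫ s in Ioc 0 t, powGaussian a D s)]

/-- The tangent-line bounds `x ≤ t e^{x - t}` (valid for `t ≥ 1`) and `x² ≥ t² + 2t (x - t)`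
reduce this to `(a + 1) D ≤ 2t`. -/
theorem powGaussian_le_mul_exp_neg (ha : 0 ≤ a) (hD : 0 < D) {t x : ℝ} (ht1 : 1 ≤ t)
    (htD : (a + 1) * D / 2 ≤ t) (hxt : t ≤ x) :
    powGaussian a D x ≤ powGaussian a D t * exp (-(x - t)) := by
  have ht : 0 < t := one_pos.trans_le ht1
  have hpow : x ^ a ≤ t ^ a * exp (a * (x - t)) := by
    have hle : x ≤ t * exp (x - t) := by nlinarith [add_one_le_exp (x - t)]
    calc x ^ a ≤ (t * exp (x - t)) ^ a := rpow_le_rpow (ht.le.trans hxt) hle ha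
      _ = t ^ a * exp (a * (x - t)) := by
        rw [mul_rpow ht.le (exp_pos _).le, ← exp_mul, mul_comm (x - t) a]
  have hexponent : a * (x - t) + -(x ^ 2) / D ≤ -(t ^ 2) / D + -(x - t) := by
    have h2t : (a + 1) * D ≤ 2 * t := by linarith
    have key : (a + 1) * (x - t) ≤ (x ^ 2 - t ^ 2) / D := by
      rw [le_div_iff₀ hD]
      nlinarith [mul_le_mul_of_nonneg_right h2t (sub_nonneg.2 hxt), sq_nonneg (x - t)]
    rw [sub_div] at key
    rw [neg_div, neg_div]
    linarith
  calc powGaussian a D x ≤ t ^ a * exp (a * (x - t)) * exp (-(x ^ 2) / D) :=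
        mul_le_mul_of_nonneg_right hpow (exp_pos _).le
    _ = t ^ a * exp (a * (x - t) + -(x ^ 2) / D) := by rw [exp_add]; ring
    _ ≤ t ^ a * exp (-(t ^ 2) / D + -(x - t)) := by gcongr
    _ = powGaussian a D t * exp (-(x - t)) := by rw [exp_add, powGaussian]; ring

theorem setIntegral_Ioi_powGaussian_le (ha : 0 ≤ a) (hD : 0 < D) {t : ℝ} (ht1 : 1 ≤ t)
    (htD : (a + 1) * D / 2 ≤ t) :
    ∫ s in Ioi t, powGaussian a D s ≤ powGaussian a D t := by
  have hshift : ∀ s, powGaussian a D t * exp (-(s - t)) =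
      powGaussian a D t * exp t * exp (-s) := fun s => by
    rw [mul_assoc, ← exp_add]; ring_nf
  have hdom : IntegrableOn (fun s => powGaussian a D t * exp (-(s - t))) (Ioi t) := by
    simp_rw [hshift]
    exact ((exp_neg_integrableOn_Ioi t one_pos).congr_fun (fun s _ => by simp)
      measurableSet_Ioi).const_mul _
  calc ∫ s in Ioi t, powGaussian a D s
      ≤ ∫ s in Ioi t, powGaussian a D t * exp (-(s - t)) := by
        refine setIntegral_mono_on
          ((integrableOn_powGaussian (by linarith) hD).mono_set (Ioi_subset_Ioi (by linarith)))
          hdom measurableSet_Ioi fun s hs => powGaussian_le_mul_exp_neg ha hD ht1 htD (le_of_lt hs)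
    _ = powGaussian a D t := by
        simp_rw [hshift]
        rw [integral_const_mul, integral_exp_neg_Ioi, mul_assoc, ← exp_add, add_neg_cancel,
          exp_zero, mul_one]

end PowGaussian

noncomputable def critExponent (N : ℕ) : ℝ := ((N : ℝ) - 2) / 2

noncomputable def critScale (N : ℕ) : ℝ := 4 * (N : ℝ) ^ 2 * ((N : ℝ) + 2)

section CriticalDensity

variable {N : ℕ}

theorem critZ_eq :
    critZ N = ∫ t in Ioi 0, powGaussian (critExponent N) (critScale N) t :=
  rfl

theorem criticalDensity_of_pos {t : ℝ} (ht : 0 < t) :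
    criticalDensity N t = powGaussian (critExponent N) (critScale N) t / critZ N :=
  if_pos ht

theorem critScale_pos (hN : 0 < N) : 0 < critScale N := by
  unfold critScale
  positivity

theorem neg_one_lt_critExponent (hN : 0 < N) : -1 < critExponent N := by
  have : (1 : ℝ) ≤ N := by exact_mod_cast hN
  unfold critExponent
  linarith

theorem critExponent_nonneg (hN : 2 ≤ N) : 0 ≤ critExponent N := by
  have : (2 : ℝ) ≤ N := by exact_mod_cast hN
  unfold critExponent
  linarith

theorem integrableOn_powGaussian_crit (hN : 0 < N) :
    IntegrableOn (powGaussian (critExponent N) (critScale N)) (Ioi 0) :=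
  integrableOn_powGaussian (neg_one_lt_critExponent hN) (critScale_pos hN)

theorem critZ_pos (hN : 0 < N) : 0 < critZ N := by
  rw [critZ_eq, setIntegral_pos_iff_support_of_nonneg_ae
    (ae_restrict_of_forall_mem measurableSet_Ioi fun t ht => (powGaussian_pos ht).le)
    (integrableOn_powGaussian_crit hN)]
  rw [show Function.support _ ∩ Ioi (0 : ℝ) = Ioi 0 from
    inter_eq_right.2 fun t ht => (powGaussian_pos ht).ne', Real.volume_Ioi]
  exact ENNReal.zero_lt_top

theorem criticalDensity_pos (hN : 0 < N) {t : ℝ} (ht : 0 < t) : 0 < criticalDensity N t := by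
  rw [criticalDensity_of_pos ht]
  exact div_pos (powGaussian_pos ht) (critZ_pos hN)

theorem criticalDensity_nonneg (t : ℝ) : 0 ≤ criticalDensity N t := by
  rcases lt_or_ge 0 t with ht | ht
  · rw [criticalDensity_of_pos ht]
    exact div_nonneg (powGaussian_pos ht).le
      (setIntegral_nonneg measurableSet_Ioi fun s hs => (powGaussian_pos hs).le)
  · rw [criticalDensity, if_neg ht.not_gt]

theorem setIntegral_criticalDensity_eq_div {s : Set ℝ} (hs : MeasurableSet s) (hs0 : s ⊆ Ioi 0) :
    ∫ t in s, criticalDensity N t =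
      (∫ t in s, powGaussian (critExponent N) (critScale N) t) / critZ N := by
  rw [setIntegral_congr_fun hs fun t ht => criticalDensity_of_pos (hs0 ht), integral_div]

theorem integrableOn_criticalDensity (hN : 0 < N) : IntegrableOn (criticalDensity N) (Ioi 0) :=
  IntegrableOn.congr_fun ((integrableOn_powGaussian_crit hN).div_const (critZ N))
    (fun _ ht => (criticalDensity_of_pos ht).symm) measurableSet_Ioi

theorem setIntegral_criticalDensity (hN : 0 < N) : ∫ t in Ioi 0, criticalDensity N t = 1 := by
  rw [setIntegral_criticalDensity_eq_div measurableSet_Ioi subset_rfl, ← critZ_eq,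
    div_self (critZ_pos hN).ne']

theorem setIntegral_Ioc_criticalDensity_le (hN : 2 ≤ N) {t : ℝ} (ht : 0 < t) :
    ∫ s in Ioc 0 t, criticalDensity N s ≤
      exp (t ^ 2 / critScale N) * (t * criticalDensity N t) := by
  rw [setIntegral_criticalDensity_eq_div measurableSet_Ioc Ioc_subset_Ioi_self,
    criticalDensity_of_pos ht, ← mul_div_assoc, ← mul_div_assoc]
  exact div_le_div_of_nonneg_right (setIntegral_Ioc_powGaussian_le (critExponent_nonneg hN)
    (critScale_pos (by omega)).le ht.le) (critZ_pos (by omega)).le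

theorem setIntegral_Ioi_criticalDensity_le (hN : 2 ≤ N) {t : ℝ} (ht1 : 1 ≤ t)
    (htD : (critExponent N + 1) * critScale N / 2 ≤ t) :
    ∫ s in Ioi t, criticalDensity N s ≤ criticalDensity N t := by
  have ht : 0 < t := one_pos.trans_le ht1
  rw [setIntegral_criticalDensity_eq_div measurableSet_Ioi (Ioi_subset_Ioi ht.le),
    criticalDensity_of_pos ht]
  exact div_le_div_of_nonneg_right (setIntegral_Ioi_powGaussian_le (critExponent_nonneg hN)
    (critScale_pos (by omega)) ht1 htD) (critZ_pos (by omega)).le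

end CriticalDensity

theorem stmt_15 (N : ℕ) (hN : 2 ≤ N) :
    ∃ C : ℝ, 0 < C ∧ ∀ h : ℝ → ℝ, Measurable h → ∀ M : ℝ, (∀ t, |h t| ≤ M) →
      ∀ t : ℝ, 0 < t →
        |(∫ s in (0 : ℝ)..t,
            (h s - ∫ u in Set.Ioi (0 : ℝ), h u * criticalDensity N u) * criticalDensity N s)
          / (t * criticalDensity N t)| ≤ C * M := by
  have hN0 : 0 < N := by omega
  set T := (critExponent N + 1) * critScale N / 2
  have hT1 : 1 ≤ T := by
    have : (2 : ℝ) ≤ N := by exact_mod_cast hN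
    simp only [T, critExponent, critScale]
    nlinarith
  refine ⟨2 * exp (T ^ 2 / critScale N), by positivity, fun h hh M hM t ht => ?_⟩
  have hp := criticalDensity_nonneg (N := N)
  have hpi := integrableOn_criticalDensity hN0
  have hp1 := setIntegral_criticalDensity hN0
  have hpt : 0 < t * criticalDensity N t := mul_pos ht (criticalDensity_pos hN0 ht)
  have hM0 : 0 ≤ M := (abs_nonneg _).trans (hM 0)
  rw [abs_div, abs_of_pos hpt, div_le_iff₀ hpt, intervalIntegral.integral_of_le ht.le]
  refine (?_ : _ ≤ 2 * M * (exp (T ^ 2 / critScale N) * (t * criticalDensity N t))).trans_eq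
    (by ring)
  have hD := (critScale_pos hN0).le
  rcases le_total t T with htT | hTt
  · have hbound := abs_setIntegral_centered_mul_le hM hp hpi hp1 (Iic t)
    rw [Measure.restrict_restrict measurableSet_Iic, Iic_inter_Ioi] at hbound
    calc _ ≤ 2 * M * ∫ s in Ioc 0 t, criticalDensity N s := hbound
      _ ≤ 2 * M * (exp (t ^ 2 / critScale N) * (t * criticalDensity N t)) := by
        gcongr
        exact setIntegral_Ioc_criticalDensity_le hN ht
      _ ≤ 2 * M * (exp (T ^ 2 / critScale N) * (t * criticalDensity N t)) := by
        gcongr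
  · have hbound := abs_setIntegral_centered_mul_le_compl hh.aestronglyMeasurable hM hp hpi hp1
      (measurableSet_Iic (a := t))
    rw [Measure.restrict_restrict measurableSet_Iic, Iic_inter_Ioi,
      Measure.restrict_restrict measurableSet_Iic.compl, compl_Iic, Ioi_inter_Ioi,
      max_eq_left ht.le] at hbound
    calc _ ≤ 2 * M * ∫ s in Ioi t, criticalDensity N s := hbound
      _ ≤ 2 * M * criticalDensity N t := by
        gcongr
        exact setIntegral_Ioi_criticalDensity_le hN (hT1.trans hTt) hTt
      _ ≤ 2 * M * (exp (T ^ 2 / critScale N) * (t * criticalDensity N t)) := by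
        have hexp : 1 ≤ exp (T ^ 2 / critScale N) := one_le_exp (by positivity)
        gcongr 2 * M * ?_
        rw [← mul_assoc]
        exact le_mul_of_one_le_left (hp t) (one_le_mul_of_one_le_of_one_le hexp (hT1.trans hTt))
end
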